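/- arXiv:2603.18041 — 6 statements merged into one kernel-verified Lean document; each statement's English description precedes it below -/
import Mathlib

section
/- Let (M, d) be a metric space, let G be a group acting on M by isometries, and fix n ≥ 1. For any two configurations x, y : Fin n → M, the Gromov–Hausdorff distance between the finite metric spaces range(x) and range(y) (each equipped with the metric induced from M) is at most the formation matching distance D(x,y); that is, d_GH(range x, range y) ≤ inf over g ∈ G and permutations σ of Fin n of max_{1≤i≤n} d(g•x_i, y_{σ(i)}). -/
/-- the Gromov–Hausdorff distance between the induced finite metric
spaces is bounded above by the formation matching distance. -/
theorem stmt_0 {M : Type*} [MetricSpace M] {G : Type*} [Group G] [MulAction G M]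
    (hiso : ∀ (g : G) (p q : M), dist (g • p) (g • q) = dist p q)
    {n : ℕ} (hn : 1 ≤ n) (x y : Fin n → M) :
    haveI : Nonempty (Set.range x) := ⟨⟨x ⟨0, hn⟩, Set.mem_range_self _⟩⟩
    haveI : Nonempty (Set.range y) := ⟨⟨y ⟨0, hn⟩, Set.mem_range_self _⟩⟩
    haveI : Finite (Set.range x) := Set.finite_range x
    haveI : Finite (Set.range y) := Set.finite_range y
    GromovHausdorff.ghDist (Set.range x) (Set.range y) ≤
      ⨅ p : G × Equiv.Perm (Fin n), ⨆ i : Fin n, dist (p.1 • x i) (y (p.2 i)) := by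
  haveI : Nonempty (Set.range x) := ⟨⟨x ⟨0, hn⟩, Set.mem_range_self _⟩⟩
  haveI : Nonempty (Set.range y) := ⟨⟨y ⟨0, hn⟩, Set.mem_range_self _⟩⟩
  haveI : Finite (Set.range x) := Set.finite_range x
  haveI : Finite (Set.range y) := Set.finite_range y
  apply le_ciInf
  rintro ⟨g, σ⟩
  -- the sup is over a finite type, so it's attained / bounded
  have hbdd : BddAbove (Set.range fun i : Fin n => dist (g • x i) (y (σ i))) :=
    Set.Finite.bddAbove (Set.finite_range _)
  set r := ⨆ i : Fin n, dist (g • x i) (y (σ i)) with hr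
  have hi : ∀ i, dist (g • x i) (y (σ i)) ≤ r := fun i => le_ciSup hbdd i
  have hr0 : 0 ≤ r := le_trans dist_nonneg (hi ⟨0, hn⟩)
  -- isometric embeddings into M
  let Φ : Set.range x → M := fun p => g • (p : M)
  let Ψ : Set.range y → M := fun p => (p : M)
  have hΦ : Isometry Φ := fun p q => by
    simp [Φ, edist_dist, hiso, Subtype.dist_eq]
  have hΨ : Isometry Ψ := fun p q => by
    simp [Ψ, edist_dist, Subtype.dist_eq]
  refine le_trans (GromovHausdorff.ghDist_le_hausdorffDist hΦ hΨ) ?_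
  apply Metric.hausdorffDist_le_of_mem_dist hr0
  · rintro _ ⟨⟨_, i, rfl⟩, rfl⟩
    exact ⟨y (σ i), ⟨⟨y (σ i), Set.mem_range_self _⟩, rfl⟩, hi i⟩
  · rintro _ ⟨⟨_, j, rfl⟩, rfl⟩
    refine ⟨g • x (σ.symm j), ⟨⟨x (σ.symm j), Set.mem_range_self _⟩, rfl⟩, ?_⟩
    rw [dist_comm]
    simpa using hi (σ.symm j)
end

section
/- Let (M, d) be a metric space, let G be a compact topological group acting continuously on M by isometries, and fix n ≥ 1. If configurations x, y : Fin n → M satisfy D(x,y) = 0, then x and y lie in the same (G × S_n)-orbit: there exist g ∈ G and a permutation σ of Fin n such that y_{σ(i)} = g•x_i for all i. -/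
/-- for a compact topological group acting continuously by isometries,
vanishing formation matching distance implies the configurations lie in the same
`(G × Sₙ)`-orbit. -/
theorem stmt_6 {M : Type*} [MetricSpace M] {G : Type*} [Group G]
    [TopologicalSpace G] [IsTopologicalGroup G] [CompactSpace G]
    [MulAction G M] [ContinuousSMul G M]
    (hiso : ∀ (g : G) (p q : M), dist (g • p) (g • q) = dist p q)
    {n : ℕ} (hn : 1 ≤ n) (x y : Fin n → M)
    (h0 : (⨅ p : G × Equiv.Perm (Fin n), ⨆ i : Fin n, dist (p.1 • x i) (y (p.2 i))) = 0) :
    ∃ (g : G) (σ : Equiv.Perm (Fin n)), ∀ i : Fin n, y (σ i) = g • x i := by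
  haveI : Nonempty (Fin n) := ⟨⟨0, hn⟩⟩
  letI : TopologicalSpace (Equiv.Perm (Fin n)) := ⊥
  haveI : DiscreteTopology (Equiv.Perm (Fin n)) := ⟨rfl⟩
  set f : G × Equiv.Perm (Fin n) → ℝ :=
    fun p => ⨆ i : Fin n, dist (p.1 • x i) (y (p.2 i)) with hf
  have hcont : Continuous f := by
    have : f = fun p => Finset.univ.sup' Finset.univ_nonempty
        (fun i => dist (p.1 • x i) (y (p.2 i))) := by
      funext p
      rw [Finset.sup'_univ_eq_ciSup]
    rw [this]
    apply Continuous.finset_sup'_apply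
    intro i _
    exact Continuous.dist (continuous_fst.smul continuous_const)
      ((continuous_of_discreteTopology (f := fun σ : Equiv.Perm (Fin n) => y (σ i))).comp
        continuous_snd)
  obtain ⟨p, -, hp⟩ := isCompact_univ.exists_isMinOn ⟨(1, 1), trivial⟩ hcont.continuousOn
  have h1 : f p ≤ 0 := by
    rw [← h0]
    exact le_ciInf fun q => hp (Set.mem_univ q)
  refine ⟨p.1, p.2, fun i => ?_⟩
  have h2 : dist (p.1 • x i) (y (p.2 i)) ≤ f p :=
    le_ciSup (f := fun j => dist (p.1 • x j) (y (p.2 j))) (Set.Finite.bddAbove (Set.finite_range _)) i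
  have := le_antisymm (h2.trans h1) dist_nonneg
  exact (dist_eq_zero.mp this).symm
end

section
/- Let (M, d) be a metric space, let G be a compact topological group acting continuously on M by isometries, and fix n ≥ 1. Let Q be the quotient of M^n (with the product topology) by the orbit equivalence relation of the H = G × S_n action, equipped with the quotient topology, and let π : M^n → Q be the projection. Then a set U ⊆ Q is open if and only if for every x ∈ M^n with π(x) ∈ U there exists ε > 0 such that every y ∈ M^n with D(x,y) < ε satisfies π(y) ∈ U. In other words, the formation matching distance D induces the quotient topology on Q. -/
/-- The orbit equivalence relation of the `H = G × Sₙ` action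
`((g,σ)·x)_i = g • x (σ⁻¹ i)` on `Mⁿ`. -/
def formationSetoid (G : Type*) [Group G] {M : Type*} [MulAction G M] (n : ℕ) :
    Setoid (Fin n → M) where
  r x y := ∃ (g : G) (σ : Equiv.Perm (Fin n)), ∀ i, y i = g • x (σ⁻¹ i)
  iseqv := by
    constructor
    · intro x
      exact ⟨1, 1, fun i => by simp⟩
    · rintro x y ⟨g, σ, h⟩
      refine ⟨g⁻¹, σ⁻¹, fun i => ?_⟩
      rw [inv_inv, h (σ i)]
      simp
    · rintro x y z ⟨g, σ, h1⟩ ⟨g', τ, h2⟩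
      refine ⟨g' * g, τ * σ, fun i => ?_⟩
      rw [h2 i, h1 (τ⁻¹ i)]
      simp [mul_smul, Equiv.Perm.mul_apply]

/-- the formation matching distance induces the quotient topology on the
orbit space `Q = Mⁿ / (G × Sₙ)`: a set `U ⊆ Q` is open iff around every point of its
preimage there is a `D`-ball whose image stays in `U`. -/
theorem stmt_7 {M : Type*} [MetricSpace M] {G : Type*} [Group G]
    [TopologicalSpace G] [IsTopologicalGroup G] [CompactSpace G]
    [MulAction G M] [ContinuousSMul G M]
    (hiso : ∀ (g : G) (p q : M), dist (g • p) (g • q) = dist p q)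
    {n : ℕ} (hn : 1 ≤ n)
    (U : Set (Quotient (formationSetoid G (M := M) n))) :
    IsOpen U ↔
      ∀ x : Fin n → M, Quotient.mk (formationSetoid G n) x ∈ U →
        ∃ ε > 0, ∀ y : Fin n → M,
          (⨅ p : G × Equiv.Perm (Fin n), ⨆ i : Fin n, dist (p.1 • x i) (y (p.2 i))) < ε →
            Quotient.mk (formationSetoid G n) y ∈ U := by
  have hne : Nonempty (Fin n) := ⟨⟨0, hn⟩⟩
  constructor
  · intro hU x hx
    have hpre : IsOpen (Quotient.mk (formationSetoid G n) ⁻¹' U) :=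
      hU.preimage continuous_quotient_mk'
    obtain ⟨ε, hε, hball⟩ := Metric.isOpen_iff.mp hpre x hx
    refine ⟨ε, hε, fun y hy => ?_⟩
    obtain ⟨⟨g, σ⟩, hp⟩ := exists_lt_of_ciInf_lt hy
    set z : Fin n → M := fun i => g⁻¹ • y (σ i) with hz
    have hzball : z ∈ Metric.ball x ε := by
      rw [Metric.mem_ball, dist_pi_lt_iff hε]
      intro i
      have hi : dist (g • x i) (y (σ i)) < ε :=
        lt_of_le_of_lt (le_ciSup (f := fun i => dist ((g, σ).1 • x i) (y ((g, σ).2 i)))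
          (Set.Finite.bddAbove (Set.finite_range _)) i) hp
      have : dist (x i) (z i) = dist (g • x i) (y (σ i)) := by
        rw [hz]
        rw [← hiso g]
        simp
      rw [dist_comm, this]
      exact hi
    have hzU : Quotient.mk (formationSetoid G n) z ∈ U := hball hzball
    have heq : Quotient.mk (formationSetoid G n) z = Quotient.mk (formationSetoid G n) y := by
      refine Quotient.sound ⟨g, σ, fun i => ?_⟩
      simp [hz]
    rwa [heq] at hzU
  · intro h
    have : IsOpen (Quotient.mk (formationSetoid G n) ⁻¹' U) := by
      rw [Metric.isOpen_iff]
      intro x hx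
      obtain ⟨ε, hε, hεU⟩ := h x hx
      refine ⟨ε, hε, fun y hy => ?_⟩
      apply hεU
      refine lt_of_le_of_lt (le_trans (ciInf_le ?_ ((1 : G), (1 : Equiv.Perm (Fin n)))) ?_) hy
      · exact ⟨0, by rintro r ⟨p, rfl⟩; exact Real.iSup_nonneg fun i => dist_nonneg⟩
      · exact ciSup_le fun i => by simpa [dist_comm] using dist_le_pi_dist y x i
    exact (isQuotientMap_quotient_mk'.isOpen_preimage).mp this
end

section
/- Let (M, d) be a complete metric space, let G be a compact topological group acting continuously on M by isometries, and fix n ≥ 1. Then the quotient formation space is complete with respect to the formation matching distance: if a sequence u : ℕ → M^n of configurations is D-Cauchy (for every ε > 0 there is N such that D(u(k), u(l)) < ε for all k, l ≥ N), then there exists a configuration z ∈ M^n such that D(u(k), z) → 0 as k → ∞. -/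
open Filter

section Aux

variable {M : Type*} [MetricSpace M] {G : Type*} [Group G] [MulAction G M]

/-- The formation matching distance. -/
noncomputable def formD {n : ℕ} (x y : Fin n → M) : ℝ :=
  ⨅ p : G × Equiv.Perm (Fin n), ⨆ i : Fin n, dist (p.1 • x i) (y (p.2 i))

lemma formD_bddBelow {n : ℕ} (x y : Fin n → M) :
    BddBelow (Set.range fun p : G × Equiv.Perm (Fin n) =>
      ⨆ i : Fin n, dist (p.1 • x i) (y (p.2 i))) := by
  refine ⟨0, ?_⟩
  rintro r ⟨p, rfl⟩
  exact Real.iSup_nonneg fun i => dist_nonneg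

lemma formD_nonneg {n : ℕ} (x y : Fin n → M) : 0 ≤ formD (G := G) x y :=
  Real.iInf_nonneg fun p => Real.iSup_nonneg fun i => dist_nonneg

lemma formD_le {n : ℕ} (x y : Fin n → M) (p : G × Equiv.Perm (Fin n)) :
    formD (G := G) x y ≤ ⨆ i : Fin n, dist (p.1 • x i) (y (p.2 i)) :=
  ciInf_le (formD_bddBelow x y) p

lemma formD_triangle {n : ℕ} (hn : 1 ≤ n)
    (hiso : ∀ (g : G) (p q : M), dist (g • p) (g • q) = dist p q)
    (x y z : Fin n → M) :
    formD (G := G) x z ≤ formD (G := G) x y + formD (G := G) y z := by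
  haveI : Nonempty (Fin n) := ⟨⟨0, hn⟩⟩
  refine le_ciInf_add_ciInf ?_
  intro p q
  calc formD (G := G) x z
      ≤ ⨆ i : Fin n, dist ((q.1 * p.1) • x i) (z ((q.2 * p.2) i)) :=
        formD_le x z (q.1 * p.1, q.2 * p.2)
    _ ≤ (⨆ i : Fin n, dist (p.1 • x i) (y (p.2 i)))
        + ⨆ i : Fin n, dist (q.1 • y i) (z (q.2 i)) := by
        refine ciSup_le fun i => ?_
        have h1 : dist ((q.1 * p.1) • x i) (z ((q.2 * p.2) i))
            ≤ dist ((q.1 * p.1) • x i) (q.1 • y (p.2 i))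
              + dist (q.1 • y (p.2 i)) (z ((q.2 * p.2) i)) := dist_triangle _ _ _
        have h2 : dist ((q.1 * p.1) • x i) (q.1 • y (p.2 i))
            = dist (p.1 • x i) (y (p.2 i)) := by
          rw [mul_smul, hiso]
        have h3 : ((q.2 * p.2) i) = q.2 (p.2 i) := rfl
        have h4 : dist (p.1 • x i) (y (p.2 i))
            ≤ ⨆ i : Fin n, dist (p.1 • x i) (y (p.2 i)) :=
          le_ciSup (f := fun i => dist (p.1 • x i) (y (p.2 i))) (Finite.bddAbove_range _) i
        have h5 : dist (q.1 • y (p.2 i)) (z (q.2 (p.2 i)))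
            ≤ ⨆ i : Fin n, dist (q.1 • y i) (z (q.2 i)) :=
          le_ciSup (Finite.bddAbove_range fun i => dist (q.1 • y i) (z (q.2 i))) (p.2 i)
        rw [h3] at h1 ⊢
        rw [h2] at h1
        exact h1.trans (add_le_add h4 h5)

end Aux

/-- for complete `M` and a compact group acting continuously by isometries,
the quotient formation space is complete for the formation matching distance: every
`D`-Cauchy sequence of configurations converges in `D` to some configuration. -/
theorem stmt_9 {M : Type*} [MetricSpace M] [CompleteSpace M] {G : Type*} [Group G]
    [TopologicalSpace G] [IsTopologicalGroup G] [CompactSpace G]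
    [MulAction G M] [ContinuousSMul G M]
    (hiso : ∀ (g : G) (p q : M), dist (g • p) (g • q) = dist p q)
    {n : ℕ} (hn : 1 ≤ n) (u : ℕ → Fin n → M)
    (hcauchy : ∀ ε > (0:ℝ), ∃ N : ℕ, ∀ k ≥ N, ∀ l ≥ N,
      (⨅ p : G × Equiv.Perm (Fin n),
        ⨆ i : Fin n, dist (p.1 • u k i) (u l (p.2 i))) < ε) :
    ∃ z : Fin n → M,
      Filter.Tendsto
        (fun k => ⨅ p : G × Equiv.Perm (Fin n),
          ⨆ i : Fin n, dist (p.1 • u k i) (z (p.2 i)))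
        Filter.atTop (nhds 0) := by
  classical
  haveI : Nonempty (Fin n) := ⟨⟨0, hn⟩⟩
  -- rewrite hypothesis in terms of formD
  have hcauchy' : ∀ ε > (0:ℝ), ∃ N : ℕ, ∀ k ≥ N, ∀ l ≥ N,
      formD (G := G) (u k) (u l) < ε := hcauchy
  have hNf : ∀ j : ℕ, ∃ N : ℕ, ∀ k ≥ N, ∀ l ≥ N,
      formD (G := G) (u k) (u l) < (1/2 : ℝ) ^ j :=
    fun j => hcauchy' _ (by positivity)
  choose Nf hNf using hNf
  -- strictly increasing indices
  set k : ℕ → ℕ := fun j =>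
    Nat.rec (Nf 0) (fun j kj => max (kj + 1) (max (Nf j) (Nf (j + 1)))) j with hk
  have hk0 : k 0 = Nf 0 := rfl
  have hksucc : ∀ j, k (j + 1) = max (k j + 1) (max (Nf j) (Nf (j + 1))) := fun j => rfl
  have hkNf : ∀ j, Nf j ≤ k j := by
    intro j
    cases j with
    | zero => exact le_of_eq hk0.symm
    | succ m =>
      rw [hksucc m]
      exact le_trans (le_max_right _ _) (le_max_right _ _)
  have hkNf' : ∀ j, Nf j ≤ k (j + 1) := by
    intro j
    rw [hksucc j]
    exact le_trans (le_max_left _ _) (le_max_right _ _)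
  -- choose near-optimal transforms
  have hp : ∀ j : ℕ, ∃ p : G × Equiv.Perm (Fin n),
      (⨆ i : Fin n, dist (p.1 • u (k j) i) (u (k (j + 1)) (p.2 i))) < (1/2 : ℝ) ^ j :=
    fun j => exists_lt_of_ciInf_lt (hNf j (k j) (hkNf j) (k (j + 1)) (hkNf' j))
  choose p hp using hp
  -- cumulative transforms
  set c : ℕ → G × Equiv.Perm (Fin n) := fun j =>
    Nat.rec (1, 1) (fun j cj => (cj.1 * (p j).1⁻¹, (p j).2 * cj.2)) j with hc
  have hcsucc : ∀ j, c (j + 1) = ((c j).1 * (p j).1⁻¹, (p j).2 * (c j).2) := fun j => rfl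
  set v : ℕ → Fin n → M := fun j i => (c j).1 • u (k j) ((c j).2 i) with hv
  -- successive distances
  have hstep : ∀ j i, dist (v j i) (v (j + 1) i) ≤ (1/2 : ℝ) ^ j := by
    intro j i
    have hv1 : v (j + 1) i
        = ((c j).1 * (p j).1⁻¹) • u (k (j + 1)) ((p j).2 ((c j).2 i)) := by
      show (c (j + 1)).1 • u (k (j + 1)) ((c (j + 1)).2 i) = _
      rw [hcsucc j]
      rfl
    have : dist (v j i) (v (j + 1) i)
        = dist ((p j).1 • u (k j) ((c j).2 i)) (u (k (j + 1)) ((p j).2 ((c j).2 i))) := by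
      rw [hv1]
      show dist ((c j).1 • u (k j) ((c j).2 i)) _ = _
      rw [mul_smul, hiso, ← hiso (p j).1, smul_inv_smul]
    rw [this]
    exact le_of_lt (lt_of_le_of_lt
      (le_ciSup (Finite.bddAbove_range fun i' =>
        dist ((p j).1 • u (k j) i') (u (k (j + 1)) ((p j).2 i'))) ((c j).2 i)) (hp j))
  -- each coordinate is Cauchy, with limit z i
  have hcs : ∀ i : Fin n, ∃ zi : M, Tendsto (fun j => v j i) atTop (nhds zi) := by
    intro i
    have : CauchySeq fun j => v j i := by
      refine cauchySeq_of_le_geometric (1/2) 1 (by norm_num) fun j => ?_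
      simpa using hstep j i
    exact cauchySeq_tendsto_of_complete this
  choose z hz using hcs
  refine ⟨z, ?_⟩
  -- distance from v j to z
  have hvz : ∀ j i, dist (v j i) (z i) ≤ 2 * (1/2 : ℝ) ^ j := by
    intro j i
    have := dist_le_of_le_geometric_of_tendsto (1/2) 1 (by norm_num : (1:ℝ)/2 < 1)
      (fun m => by simpa using hstep m i) (hz i) j
    calc dist (v j i) (z i) ≤ 1 * (1/2 : ℝ) ^ j / (1 - 1/2) := this
      _ = 2 * (1/2 : ℝ) ^ j := by ring
  -- formD bound from u (k j) to z
  have hDz : ∀ j, formD (G := G) (u (k j)) z ≤ 2 * (1/2 : ℝ) ^ j := by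
    intro j
    refine le_trans (formD_le (u (k j)) z ((c j).1, (c j).2⁻¹)) (ciSup_le fun i => ?_)
    have hvi : v j ((c j).2⁻¹ i) = (c j).1 • u (k j) i := by
      show (c j).1 • u (k j) ((c j).2 ((c j).2⁻¹ i)) = _
      simp
    calc dist ((c j).1 • u (k j) i) (z ((c j).2⁻¹ i))
        = dist (v j ((c j).2⁻¹ i)) (z ((c j).2⁻¹ i)) := by rw [hvi]
      _ ≤ 2 * (1/2 : ℝ) ^ j := hvz j _
  -- conclude
  have hmain : ∀ m, ∀ l ≥ Nf m, formD (G := G) (u l) z ≤ 3 * (1/2 : ℝ) ^ m := by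
    intro m l hl
    have h1 : formD (G := G) (u l) (u (k m)) < (1/2 : ℝ) ^ m :=
      hNf m l hl (k m) (hkNf m)
    have h2 := hDz m
    have := formD_triangle hn hiso (u l) (u (k m)) z
    linarith
  have hgoal : Tendsto (fun k => formD (G := G) (u k) z) atTop (nhds 0) → _ := id
  refine hgoal ?_
  rw [Metric.tendsto_atTop]
  intro ε hε
  obtain ⟨m, hm⟩ : ∃ m : ℕ, 3 * (1/2 : ℝ) ^ m < ε := by
    have h := exists_pow_lt_of_lt_one (div_pos hε (by norm_num : (0:ℝ) < 3))
      (by norm_num : (1/2 : ℝ) < 1)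
    obtain ⟨m, hm⟩ := h
    exact ⟨m, by rw [mul_comm]; exact (lt_div_iff₀ (by norm_num)).mp hm⟩
  refine ⟨Nf m, fun l hl => ?_⟩
  have h := hmain m l hl
  have hnn : (0:ℝ) ≤ formD (G := G) (u l) z := formD_nonneg _ _
  rw [Real.dist_eq, sub_zero, abs_of_nonneg hnn]
  calc formD (G := G) (u l) z ≤ 3 * (1/2 : ℝ) ^ m := h
    _ < ε := hm
end

section
/- Let S² denote the unit sphere in Euclidean ℝ³ with geodesic distance d_S(u,v) = arccos⟨u,v⟩, and let SO(3) be the group of 3×3 real special orthogonal matrices acting on ℝ³. For unit vectors u₁, u₂, v₁, v₂ ∈ S², the two-point formation matching distance satisfies: inf over R ∈ SO(3) and σ ∈ S₂ of max{d_S(R u₁, v_{σ(1)}), d_S(R u₂, v_{σ(2)})} = ½·|d_S(u₁,u₂) − d_S(v₁,v₂)|. -/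
set_option maxHeartbeats 1000000

open scoped RealInnerProductSpace

open Real Matrix

local notation "E" => EuclideanSpace ℝ (Fin 3)

private lemma arccos_antitone' : Antitone Real.arccos := by
  intro x y h
  unfold Real.arccos
  linarith [Real.monotone_arcsin h]

private lemma sphere_tri' {x y z : EuclideanSpace ℝ (Fin 3)}
    (hx : ‖x‖ = 1) (hy : ‖y‖ = 1) (hz : ‖z‖ = 1) :
    Real.arccos ⟪x, z⟫ ≤ Real.arccos ⟪x, y⟫ + Real.arccos ⟪y, z⟫ := by
  set A := Real.arccos ⟪x, y⟫ with hA
  set B := Real.arccos ⟪y, z⟫ with hB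
  by_cases hπ : Real.pi ≤ A + B
  · exact (Real.arccos_le_pi _).trans hπ
  push_neg at hπ
  have hp : |⟪x, y⟫| ≤ 1 := by simpa [hx, hy] using abs_real_inner_le_norm x y
  have hq : |⟪y, z⟫| ≤ 1 := by simpa [hy, hz] using abs_real_inner_le_norm y z
  set p := (⟪x, y⟫ : ℝ) with hpd
  set q := (⟪y, z⟫ : ℝ) with hqd
  have hcA : Real.cos A = p := Real.cos_arccos (neg_le_of_abs_le hp) (le_of_abs_le hp)
  have hcB : Real.cos B = q := Real.cos_arccos (neg_le_of_abs_le hq) (le_of_abs_le hq)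
  have hsA : Real.sin A = Real.sqrt (1 - p ^ 2) := Real.sin_arccos p
  have hsB : Real.sin B = Real.sqrt (1 - q ^ 2) := Real.sin_arccos q
  set x' := x - p • y with hx'
  set z' := z - q • y with hz'
  have hxn : ‖x'‖ ^ 2 = 1 - p ^ 2 := by
    rw [hx', norm_sub_sq_real, real_inner_smul_right, norm_smul, hx, hy, ← hpd]
    simp [sq_abs]
    ring
  have hzy : (⟪z, y⟫ : ℝ) = q := by rw [real_inner_comm]
  have hyx : (⟪y, x⟫ : ℝ) = p := by rw [real_inner_comm]
  have hzn : ‖z'‖ ^ 2 = 1 - q ^ 2 := by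
    rw [hz', norm_sub_sq_real, real_inner_smul_right, norm_smul, hz, hy, hzy]
    simp [Real.norm_eq_abs, sq_abs]
    ring
  have hxs : ‖x'‖ = Real.sqrt (1 - p ^ 2) := by
    rw [← hxn]; exact (Real.sqrt_sq (norm_nonneg _)).symm
  have hzs : ‖z'‖ = Real.sqrt (1 - q ^ 2) := by
    rw [← hzn]; exact (Real.sqrt_sq (norm_nonneg _)).symm
  have hyy : (⟪y, y⟫ : ℝ) = 1 := by
    rw [real_inner_self_eq_norm_sq, hy]; norm_num
  have hinner : ⟪x, z⟫ = ⟪x', z'⟫ + p * q := by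
    rw [hx', hz']
    simp only [inner_sub_left, inner_sub_right, real_inner_smul_left, real_inner_smul_right,
      hyy, hzy, hyx]
    ring
  have hCS : -(‖x'‖ * ‖z'‖) ≤ ⟪x', z'⟫ :=
    neg_le_of_abs_le (abs_real_inner_le_norm x' z')
  have hcos : Real.cos (A + B) ≤ ⟪x, z⟫ := by
    rw [Real.cos_add, hcA, hcB, hsA, hsB, hinner]
    have h2 : -(Real.sqrt (1 - p ^ 2) * Real.sqrt (1 - q ^ 2)) ≤ ⟪x', z'⟫ := by
      rw [← hxs, ← hzs]; exact hCS
    linarith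
  have h0 : 0 ≤ A + B := add_nonneg (Real.arccos_nonneg _) (Real.arccos_nonneg _)
  calc Real.arccos ⟪x, z⟫ ≤ Real.arccos (Real.cos (A + B)) := arccos_antitone' hcos
    _ = A + B := Real.arccos_cos h0 hπ.le

private lemma inner_eq_dot' (x y : E) :
    (⟪x, y⟫ : ℝ) = dotProduct (x : Fin 3 → ℝ) (y : Fin 3 → ℝ) := by
  simp [PiLp.inner_apply, dotProduct]
  exact Finset.sum_congr rfl fun _ _ => mul_comm _ _

private lemma inner_eq_sum' (x y : E) : (⟪x, y⟫ : ℝ) = ∑ i, x i * y i := by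
  simp [PiLp.inner_apply]
  exact Finset.sum_congr rfl fun _ _ => mul_comm _ _

private lemma finrank3' : Module.finrank ℝ (EuclideanSpace ℝ (Fin 3)) = Fintype.card (Fin 3) := by
  simp

private lemma inner_self_one' {x : E} (hx : ‖x‖ = 1) : (⟪x, x⟫ : ℝ) = 1 := by
  rw [real_inner_self_eq_norm_sq, hx]; norm_num

private lemma unit_of_inner_one' {x : E} (hx : (⟪x, x⟫ : ℝ) = 1) : ‖x‖ = 1 := by
  have h : ‖x‖ ^ 2 = 1 := by rw [← real_inner_self_eq_norm_sq, hx]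
  calc ‖x‖ = Real.sqrt (‖x‖ ^ 2) := (Real.sqrt_sq (norm_nonneg x)).symm
    _ = Real.sqrt 1 := by rw [h]
    _ = 1 := Real.sqrt_one


private lemma exists_extend_pair' {a0 a1 : EuclideanSpace ℝ (Fin 3)}
    (h0 : ‖a0‖ = 1) (h1 : ‖a1‖ = 1) (h01 : (⟪a0, a1⟫ : ℝ) = 0) :
    ∃ a : Fin 3 → EuclideanSpace ℝ (Fin 3), Orthonormal ℝ a ∧ a 0 = a0 ∧ a 1 = a1 := by
  have hv : Orthonormal ℝ (({0, 1} : Set (Fin 3)).restrict ![a0, a1, a0]) := by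
    rw [orthonormal_iff_ite]
    rintro ⟨i, hi⟩ ⟨j, hj⟩
    simp only [Set.mem_insert_iff, Set.mem_singleton_iff] at hi hj
    rcases hi with rfl | rfl <;> rcases hj with rfl | rfl <;>
      simp [Set.restrict, inner_self_one' h0, inner_self_one' h1, h01,
        real_inner_comm a0 a1, Subtype.ext_iff, h0, h1]
  obtain ⟨b, hb⟩ := hv.exists_orthonormalBasis_extension_of_card_eq finrank3'
  exact ⟨⇑b, b.orthonormal, by simpa using hb 0 (by simp), by simpa using hb 1 (by simp)⟩

private lemma exists_adapted' {u₁ u₂ : EuclideanSpace ℝ (Fin 3)}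
    (hu₁ : ‖u₁‖ = 1) (hu₂ : ‖u₂‖ = 1) :
    ∃ a : Fin 3 → EuclideanSpace ℝ (Fin 3), Orthonormal ℝ a ∧ a 0 = u₁ ∧
      u₂ = Real.cos (Real.arccos ⟪u₁, u₂⟫) • a 0 + Real.sin (Real.arccos ⟪u₁, u₂⟫) • a 1 := by
  set p := (⟪u₁, u₂⟫ : ℝ) with hpd
  have hp : |p| ≤ 1 := by simpa [hu₁, hu₂] using abs_real_inner_le_norm u₁ u₂
  have hcos : Real.cos (Real.arccos p) = p :=
    Real.cos_arccos (neg_le_of_abs_le hp) (le_of_abs_le hp)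
  have hsin : Real.sin (Real.arccos p) = Real.sqrt (1 - p ^ 2) := Real.sin_arccos p
  set w := u₂ - p • u₁ with hw
  have hw1 : (⟪u₁, w⟫ : ℝ) = 0 := by
    rw [hw, inner_sub_right, real_inner_smul_right, inner_self_one' hu₁]; ring
  have hwn : ‖w‖ ^ 2 = 1 - p ^ 2 := by
    have h21 : (⟪u₂, u₁⟫ : ℝ) = p := by rw [real_inner_comm]
    rw [hw, norm_sub_sq_real, real_inner_smul_right, norm_smul, hu₂, hu₁, h21]
    simp [Real.norm_eq_abs, sq_abs]
    ring
  have hws : ‖w‖ = Real.sqrt (1 - p ^ 2) := by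
    rw [← hwn]; exact (Real.sqrt_sq (norm_nonneg _)).symm
  by_cases hw0 : w = 0
  · have hsin0 : Real.sqrt (1 - p ^ 2) = 0 := by rw [← hws, hw0, norm_zero]
    have hv : Orthonormal ℝ (({0} : Set (Fin 3)).restrict ![u₁, u₁, u₁]) := by
      rw [orthonormal_iff_ite]
      rintro ⟨i, hi⟩ ⟨j, hj⟩
      simp only [Set.mem_singleton_iff] at hi hj
      subst hi; subst hj
      simp [Set.restrict, inner_self_one' hu₁, hu₁]
    obtain ⟨b, hb⟩ := hv.exists_orthonormalBasis_extension_of_card_eq finrank3'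
    have hb0 : b 0 = u₁ := by simpa using hb 0 (by simp)
    refine ⟨⇑b, b.orthonormal, hb0, ?_⟩
    have hu2 : u₂ = p • u₁ := by
      have : u₂ - p • u₁ = 0 := by rw [← hw]; exact hw0
      exact sub_eq_zero.mp this
    rw [hb0, hcos, hsin, hsin0, zero_smul, add_zero, hu2]
  · have hwpos : 0 < ‖w‖ := norm_pos_iff.mpr hw0
    set a1 := ‖w‖⁻¹ • w with ha1
    have ha1n : ‖a1‖ = 1 := by
      rw [ha1, norm_smul, norm_inv, norm_norm, inv_mul_cancel₀ hwpos.ne']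
    have ha01 : (⟪u₁, a1⟫ : ℝ) = 0 := by
      rw [ha1, real_inner_smul_right, hw1, mul_zero]
    obtain ⟨a, ha, h0, h1⟩ := exists_extend_pair' hu₁ ha1n ha01
    refine ⟨a, ha, h0, ?_⟩
    rw [h0, h1, hcos, hsin, ← hws, ha1, smul_smul, mul_inv_cancel₀ hwpos.ne', one_smul, hw]
    module

/-- matrix with columns `f 0, f 1, f 2` -/
private def colM (f : Fin 3 → EuclideanSpace ℝ (Fin 3)) : Matrix (Fin 3) (Fin 3) ℝ :=
  Matrix.of fun i j => f j i

private lemma colM_orth' {f : Fin 3 → EuclideanSpace ℝ (Fin 3)} (hf : Orthonormal ℝ f) :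
    (colM f)ᵀ * colM f = 1 := by
  ext i j
  rw [Matrix.mul_apply, Matrix.one_apply]
  have := orthonormal_iff_ite.mp hf i j
  rw [inner_eq_sum'] at this
  simpa [colM, Matrix.transpose_apply] using this

private lemma colM_mulVec_basis' {f : Fin 3 → EuclideanSpace ℝ (Fin 3)} (hf : Orthonormal ℝ f)
    (g : Fin 3 → EuclideanSpace ℝ (Fin 3)) (j : Fin 3) :
    (colM g * (colM f)ᵀ).mulVec (f j) = g j := by
  rw [← Matrix.mulVec_mulVec]
  have h1 : (colM f)ᵀ.mulVec (f j) = fun k => if k = j then 1 else 0 := by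
    funext k
    have := orthonormal_iff_ite.mp hf k j
    rw [inner_eq_sum'] at this
    simpa [Matrix.mulVec, dotProduct, colM] using this
  rw [h1]
  funext i
  simp [Matrix.mulVec, dotProduct, colM]

private lemma mulVec_lin' (M : Matrix (Fin 3) (Fin 3) ℝ) (r s : ℝ)
    (x y : EuclideanSpace ℝ (Fin 3)) :
    M.mulVec (((r • x + s • y) : EuclideanSpace ℝ (Fin 3)) : Fin 3 → ℝ) =
      r • M.mulVec (x : Fin 3 → ℝ) + s • M.mulVec (y : Fin 3 → ℝ) := by
  show M.mulVec (r • (x : Fin 3 → ℝ) + s • (y : Fin 3 → ℝ)) = _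
  rw [Matrix.mulVec_add, Matrix.mulVec_smul, Matrix.mulVec_smul]

private lemma det_sq_one' {A : Matrix (Fin 3) (Fin 3) ℝ} (h : Aᵀ * A = 1) :
    A.det * A.det = 1 := by
  have := congrArg Matrix.det h
  rwa [Matrix.det_mul, Matrix.det_transpose, Matrix.det_one] at this

private lemma cf_orth' {b : Fin 3 → EuclideanSpace ℝ (Fin 3)} (hb : Orthonormal ℝ b)
    (δ s : ℝ) (hs : s * s = 1) :
    Orthonormal ℝ
      ![Real.cos δ • b 0 - Real.sin δ • b 1, Real.sin δ • b 0 + Real.cos δ • b 1, s • b 2] := by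
  have h := orthonormal_iff_ite.mp hb
  have e00 : (⟪b 0, b 0⟫ : ℝ) = 1 := by simpa using h 0 0
  have e01 : (⟪b 0, b 1⟫ : ℝ) = 0 := by simpa using h 0 1
  have e02 : (⟪b 0, b 2⟫ : ℝ) = 0 := by simpa using h 0 2
  have e10 : (⟪b 1, b 0⟫ : ℝ) = 0 := by simpa using h 1 0
  have e11 : (⟪b 1, b 1⟫ : ℝ) = 1 := by simpa using h 1 1
  have e12 : (⟪b 1, b 2⟫ : ℝ) = 0 := by simpa using h 1 2
  have e20 : (⟪b 2, b 0⟫ : ℝ) = 0 := by simpa using h 2 0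
  have e21 : (⟪b 2, b 1⟫ : ℝ) = 0 := by simpa using h 2 1
  have e22 : (⟪b 2, b 2⟫ : ℝ) = 1 := by simpa using h 2 2
  have hpy := Real.sin_sq_add_cos_sq δ
  rw [orthonormal_iff_ite]
  intro i j
  fin_cases i <;> fin_cases j <;>
    · norm_num [-PiLp.inner_apply, -inner_self_eq_norm_sq_to_K, inner_sub_left, inner_sub_right, inner_add_left,
        inner_add_right, real_inner_smul_left, real_inner_smul_right,
        e00, e01, e02, e10, e11, e12, e20, e21, e22, Fin.ext_iff]
      try first | (linear_combination hpy) | (linear_combination hs) | ring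

private lemma colM_det_smul' (c0 c1 b2 : EuclideanSpace ℝ (Fin 3)) (s : ℝ) :
    (colM ![c0, c1, s • b2]).det = s * (colM ![c0, c1, b2]).det := by
  have h1 : colM ![c0, c1, s • b2] =
      (colM ![c0, c1, b2]).updateCol 2 (s • fun i => b2 i) := by
    ext i k
    fin_cases k <;> simp [colM, Matrix.updateCol_apply, Fin.ext_iff]
  have h2 : (colM ![c0, c1, b2]).updateCol 2 (fun i => b2 i) = colM ![c0, c1, b2] := by
    ext i k
    fin_cases k <;> simp [colM, Matrix.updateCol_apply, Fin.ext_iff]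
  rw [h1, Matrix.det_updateCol_smul, h2]

/-- Geodesic (great-circle) distance on the unit sphere in `ℝ³`. -/
noncomputable def sphereDist (u v : EuclideanSpace ℝ (Fin 3)) : ℝ :=
  Real.arccos ⟪u, v⟫

/-- Action of a 3×3 matrix on `ℝ³` by matrix–vector multiplication. -/
noncomputable def matAct (R : Matrix (Fin 3) (Fin 3) ℝ) (u : EuclideanSpace ℝ (Fin 3)) :
    EuclideanSpace ℝ (Fin 3) :=
  (EuclideanSpace.equiv (Fin 3) ℝ).symm (R.mulVec (EuclideanSpace.equiv (Fin 3) ℝ u))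

private lemma matAct_inner' {M : Matrix (Fin 3) (Fin 3) ℝ} (h : Mᵀ * M = 1)
    (x y : EuclideanSpace ℝ (Fin 3)) :
    (⟪matAct M x, matAct M y⟫ : ℝ) = ⟪x, y⟫ := by
  rw [inner_eq_dot' (matAct M x) (matAct M y), inner_eq_dot' x y]
  show M.mulVec x ⬝ᵥ M.mulVec y = x ⬝ᵥ y
  calc M.mulVec x ⬝ᵥ M.mulVec y = x ⬝ᵥ (Mᵀ * M).mulVec y := by
        rw [← mulVec_mulVec, dotProduct_mulVec x Mᵀ, vecMul_transpose]
    _ = x ⬝ᵥ y := by rw [h, one_mulVec]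

private lemma perm2' (σ : Equiv.Perm (Fin 2)) :
    (σ 0 = 0 ∧ σ 1 = 1) ∨ (σ 0 = 1 ∧ σ 1 = 0) := by
  have h2 : ∀ x : Fin 2, x = 0 ∨ x = 1 := by decide
  have hne : σ 0 ≠ σ 1 := fun h => by simpa using σ.injective h
  rcases h2 (σ 0) with h0 | h0 <;> rcases h2 (σ 1) with h1 | h1 <;>
    simp_all

/-- the two-point formation matching distance on `S²` modulo `SO(3)`
equals half the absolute difference of the geodesic separations. -/
theorem stmt_12 (u₁ u₂ v₁ v₂ : EuclideanSpace ℝ (Fin 3))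
    (hu₁ : ‖u₁‖ = 1) (hu₂ : ‖u₂‖ = 1) (hv₁ : ‖v₁‖ = 1) (hv₂ : ‖v₂‖ = 1) :
    (⨅ p : Matrix.specialOrthogonalGroup (Fin 3) ℝ × Equiv.Perm (Fin 2),
        max (sphereDist (matAct (p.1 : Matrix (Fin 3) (Fin 3) ℝ) u₁) (![v₁, v₂] (p.2 0)))
            (sphereDist (matAct (p.1 : Matrix (Fin 3) (Fin 3) ℝ) u₂) (![v₁, v₂] (p.2 1)))) =
      |sphereDist u₁ u₂ - sphereDist v₁ v₂| / 2 := by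
  classical
  set α := Real.arccos ⟪u₁, u₂⟫ with hαd
  set β := Real.arccos ⟪v₁, v₂⟫ with hβd
  have hα0 : 0 ≤ α := Real.arccos_nonneg _
  have hαπ : α ≤ Real.pi := Real.arccos_le_pi _
  have hβ0 : 0 ≤ β := Real.arccos_nonneg _
  have hβπ : β ≤ Real.pi := Real.arccos_le_pi _
  have hRHS : |sphereDist u₁ u₂ - sphereDist v₁ v₂| / 2 = |α - β| / 2 := rfl
  -- ==================== lower bound ====================
  have lower : ∀ p : Matrix.specialOrthogonalGroup (Fin 3) ℝ × Equiv.Perm (Fin 2),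
      |α - β| / 2 ≤
        max (sphereDist (matAct (p.1 : Matrix (Fin 3) (Fin 3) ℝ) u₁) (![v₁, v₂] (p.2 0)))
            (sphereDist (matAct (p.1 : Matrix (Fin 3) (Fin 3) ℝ) u₂) (![v₁, v₂] (p.2 1))) := by
    rintro ⟨⟨R, hR⟩, σ⟩
    obtain ⟨horth, hdet⟩ := Matrix.mem_specialOrthogonalGroup_iff.mp hR
    have hRT : Rᵀ * R = 1 := by
      have := (Matrix.mem_orthogonalGroup_iff' (Fin 3) ℝ).mp horth
      simpa [Matrix.star_eq_conjTranspose, Matrix.conjTranspose] using this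
    set x₁ := matAct R u₁ with hx₁
    set x₂ := matAct R u₂ with hx₂
    have hiu : (⟪x₁, x₂⟫ : ℝ) = ⟪u₁, u₂⟫ := matAct_inner' hRT u₁ u₂
    have hn1 : ‖x₁‖ = 1 := unit_of_inner_one' (by
      rw [hx₁, matAct_inner' hRT u₁ u₁]; exact inner_self_one' hu₁)
    have hn2 : ‖x₂‖ = 1 := unit_of_inner_one' (by
      rw [hx₂, matAct_inner' hRT u₂ u₂]; exact inner_self_one' hu₂)
    set w₁ := ![v₁, v₂] (σ 0) with hw₁
    set w₂ := ![v₁, v₂] (σ 1) with hw₂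
    have hperm : (w₁ = v₁ ∧ w₂ = v₂) ∨ (w₁ = v₂ ∧ w₂ = v₁) := by
      rcases perm2' σ with ⟨h0, h1⟩ | ⟨h0, h1⟩
      · left; constructor <;> simp [hw₁, hw₂, h0, h1]
      · right; constructor <;> simp [hw₁, hw₂, h0, h1]
    have hnw1 : ‖w₁‖ = 1 := by rcases hperm with ⟨h, _⟩ | ⟨h, _⟩ <;> rw [h] <;> assumption
    have hnw2 : ‖w₂‖ = 1 := by rcases hperm with ⟨_, h⟩ | ⟨_, h⟩ <;> rw [h] <;> assumption
    have hwβ : Real.arccos ⟪w₁, w₂⟫ = β := by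
      rcases hperm with ⟨h1, h2⟩ | ⟨h1, h2⟩
      · rw [h1, h2]
      · rw [h1, h2, real_inner_comm]
    set d₁ := sphereDist x₁ w₁ with hd₁
    set d₂ := sphereDist x₂ w₂ with hd₂
    have hd₁e : d₁ = Real.arccos ⟪x₁, w₁⟫ := rfl
    have hd₂e : d₂ = Real.arccos ⟪x₂, w₂⟫ := rfl
    have hαe : α = Real.arccos ⟪x₁, x₂⟫ := by rw [hiu]
    -- triangle inequalities
    have t1 : α ≤ d₁ + β + d₂ := by
      have s1 : Real.arccos ⟪x₁, x₂⟫ ≤ Real.arccos ⟪x₁, w₁⟫ + Real.arccos ⟪w₁, x₂⟫ :=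
        sphere_tri' hn1 hnw1 hn2
      have s2 : Real.arccos ⟪w₁, x₂⟫ ≤ Real.arccos ⟪w₁, w₂⟫ + Real.arccos ⟪w₂, x₂⟫ :=
        sphere_tri' hnw1 hnw2 hn2
      have hc : Real.arccos ⟪w₂, x₂⟫ = d₂ := by rw [hd₂e, real_inner_comm]
      rw [hαe]
      calc Real.arccos ⟪x₁, x₂⟫ ≤ Real.arccos ⟪x₁, w₁⟫ + Real.arccos ⟪w₁, x₂⟫ := s1
        _ ≤ Real.arccos ⟪x₁, w₁⟫ + (Real.arccos ⟪w₁, w₂⟫ + Real.arccos ⟪w₂, x₂⟫) := by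
            linarith
        _ = d₁ + β + d₂ := by rw [← hd₁e, hwβ, hc]; ring
    have t2 : β ≤ d₁ + α + d₂ := by
      have s1 : Real.arccos ⟪w₁, w₂⟫ ≤ Real.arccos ⟪w₁, x₁⟫ + Real.arccos ⟪x₁, w₂⟫ :=
        sphere_tri' hnw1 hn1 hnw2
      have s2 : Real.arccos ⟪x₁, w₂⟫ ≤ Real.arccos ⟪x₁, x₂⟫ + Real.arccos ⟪x₂, w₂⟫ :=
        sphere_tri' hn1 hn2 hnw2
      have hc : Real.arccos ⟪w₁, x₁⟫ = d₁ := by rw [hd₁e, real_inner_comm]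
      calc β = Real.arccos ⟪w₁, w₂⟫ := hwβ.symm
        _ ≤ Real.arccos ⟪w₁, x₁⟫ + Real.arccos ⟪x₁, w₂⟫ := s1
        _ ≤ Real.arccos ⟪w₁, x₁⟫ + (Real.arccos ⟪x₁, x₂⟫ + Real.arccos ⟪x₂, w₂⟫) := by
            linarith
        _ = d₁ + α + d₂ := by rw [hc, ← hαe, ← hd₂e]; ring
    have hm1 : d₁ ≤ max d₁ d₂ := le_max_left _ _
    have hm2 : d₂ ≤ max d₁ d₂ := le_max_right _ _
    have habs : |α - β| ≤ 2 * max d₁ d₂ := by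
      rw [abs_sub_le_iff]
      constructor <;> linarith
    linarith
  -- ==================== upper bound : explicit minimizer ====================
  obtain ⟨a, ha, ha0, hu2⟩ := exists_adapted' hu₁ hu₂
  obtain ⟨b, hb, hb0, hv2⟩ := exists_adapted' hv₁ hv₂
  rw [← hαd] at hu2
  rw [← hβd] at hv2
  set δ := (α - β) / 2 with hδd
  set c0 : EuclideanSpace ℝ (Fin 3) := Real.cos δ • b 0 - Real.sin δ • b 1 with hc0d
  set c1 : EuclideanSpace ℝ (Fin 3) := Real.sin δ • b 0 + Real.cos δ • b 1 with hc1d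
  set s : ℝ := (colM ![c0, c1, b 2]).det * (colM a).det with hsd
  have hA : (colM a)ᵀ * colM a = 1 := colM_orth' ha
  have hC1 : (colM ![c0, c1, b 2])ᵀ * colM ![c0, c1, b 2] = 1 := by
    have := colM_orth' (cf_orth' hb δ 1 (by norm_num))
    simpa [hc0d, hc1d, one_smul] using this
  have hdA := det_sq_one' hA
  have hdC := det_sq_one' hC1
  have hs : s * s = 1 := by
    have : s * s = ((colM ![c0, c1, b 2]).det * (colM ![c0, c1, b 2]).det) *
        ((colM a).det * (colM a).det) := by rw [hsd]; ring
    rw [this, hdA, hdC, one_mul]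
  set c : Fin 3 → EuclideanSpace ℝ (Fin 3) := ![c0, c1, s • b 2] with hcd
  have hc : Orthonormal ℝ c := cf_orth' hb δ s hs
  set M := colM c * (colM a)ᵀ with hMd
  have hCs : (colM c)ᵀ * colM c = 1 := colM_orth' hc
  have hMT : Mᵀ * M = 1 := by
    rw [hMd, Matrix.transpose_mul, Matrix.transpose_transpose]
    calc colM a * (colM c)ᵀ * (colM c * (colM a)ᵀ)
        = colM a * ((colM c)ᵀ * colM c) * (colM a)ᵀ := by
          rw [Matrix.mul_assoc, Matrix.mul_assoc, Matrix.mul_assoc]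
      _ = colM a * (colM a)ᵀ := by rw [hCs, Matrix.mul_one]
      _ = 1 := mul_eq_one_comm.mp hA
  have hdet : M.det = 1 := by
    rw [hMd, Matrix.det_mul, Matrix.det_transpose, hcd, colM_det_smul']
    calc s * (colM ![c0, c1, b 2]).det * (colM a).det
        = ((colM ![c0, c1, b 2]).det * (colM ![c0, c1, b 2]).det) *
          ((colM a).det * (colM a).det) := by rw [hsd]; ring
      _ = 1 := by rw [hdA, hdC, one_mul]
  have hmem : M ∈ Matrix.specialOrthogonalGroup (Fin 3) ℝ := by
    rw [Matrix.mem_specialOrthogonalGroup_iff]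
    refine ⟨(Matrix.mem_orthogonalGroup_iff' (Fin 3) ℝ).mpr ?_, hdet⟩
    simpa [Matrix.star_eq_conjTranspose, Matrix.conjTranspose] using hMT
  -- evaluate the action
  have hM0 : M.mulVec (a 0 : Fin 3 → ℝ) = c 0 := colM_mulVec_basis' ha c 0
  have hM1 : M.mulVec (a 1 : Fin 3 → ℝ) = c 1 := colM_mulVec_basis' ha c 1
  have hc0e : c 0 = c0 := by rw [hcd]; rfl
  have hc1e : c 1 = c1 := by rw [hcd]; rfl
  have hMu1 : matAct M u₁ = c0 := by
    show (WithLp.toLp 2 (M.mulVec (u₁ : Fin 3 → ℝ)) : E) = WithLp.toLp 2 (c0 : Fin 3 → ℝ)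
    rw [← ha0, hM0, hc0e]
  have hMu2 : matAct M u₂ = Real.cos α • c0 + Real.sin α • c1 := by
    show (WithLp.toLp 2 (M.mulVec (u₂ : Fin 3 → ℝ)) : E) = WithLp.toLp 2
      ((Real.cos α • c0 + Real.sin α • c1 : EuclideanSpace ℝ (Fin 3)) : Fin 3 → ℝ)
    rw [hu2, mulVec_lin', hM0, hM1, hc0e, hc1e]
    rfl
  -- inner products of b-frame
  have hbij := orthonormal_iff_ite.mp hb
  have e00 : (⟪b 0, b 0⟫ : ℝ) = 1 := by simpa using hbij 0 0
  have e01 : (⟪b 0, b 1⟫ : ℝ) = 0 := by simpa using hbij 0 1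
  have e10 : (⟪b 1, b 0⟫ : ℝ) = 0 := by simpa using hbij 1 0
  have e11 : (⟪b 1, b 1⟫ : ℝ) = 1 := by simpa using hbij 1 1
  -- the two distances both equal |δ|
  have habsδ : |δ| ≤ Real.pi := by
    rw [hδd, abs_div]
    have : |α - β| ≤ Real.pi := abs_le.mpr ⟨by linarith, by linarith⟩
    rw [show |(2:ℝ)| = 2 by norm_num]
    nlinarith [Real.pi_pos]
  have harccos : Real.arccos (Real.cos δ) = |δ| := by
    rw [← Real.cos_abs, Real.arccos_cos (abs_nonneg δ) habsδ]
  have hi1 : (⟪matAct M u₁, v₁⟫ : ℝ) = Real.cos δ := by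
    rw [hMu1, ← hb0, hc0d]
    simp only [inner_sub_left, real_inner_smul_left, e00, e10]
    ring
  have hi2 : (⟪matAct M u₂, v₂⟫ : ℝ) = Real.cos δ := by
    rw [hMu2, hv2, hc0d, hc1d]
    simp only [inner_add_left, inner_add_right, inner_sub_left, inner_sub_right,
      real_inner_smul_left, real_inner_smul_right, e00, e01, e10, e11]
    have key : Real.cos (α - (β + δ)) = Real.cos δ := by
      congr 1
      rw [hδd]; ring
    rw [Real.cos_sub, Real.cos_add, Real.sin_add] at key
    nlinarith [key]
  have hval1 : sphereDist (matAct M u₁) v₁ = |δ| := by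
    rw [sphereDist, hi1, harccos]
  have hval2 : sphereDist (matAct M u₂) v₂ = |δ| := by
    rw [sphereDist, hi2, harccos]
  -- conclude
  have hδval : |δ| = |α - β| / 2 := by
    rw [hδd, abs_div]
    norm_num
  set p₀ : Matrix.specialOrthogonalGroup (Fin 3) ℝ × Equiv.Perm (Fin 2) := (⟨M, hmem⟩, 1)
    with hp₀
  have hfp₀ : max (sphereDist (matAct ((p₀.1 : Matrix (Fin 3) (Fin 3) ℝ)) u₁) (![v₁, v₂] (p₀.2 0)))
      (sphereDist (matAct ((p₀.1 : Matrix (Fin 3) (Fin 3) ℝ)) u₂) (![v₁, v₂] (p₀.2 1)))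
      = |α - β| / 2 := by
    have h0 : (p₀.2 0) = 0 := rfl
    have h1 : (p₀.2 1) = 1 := rfl
    rw [h0, h1]
    show max (sphereDist (matAct M u₁) v₁) (sphereDist (matAct M u₂) v₂) = _
    rw [hval1, hval2, max_self, hδval]
  rw [hRHS]
  refine le_antisymm (le_trans (ciInf_le ⟨|α - β| / 2, ?_⟩ p₀) hfp₀.le) (le_ciInf lower)
  rintro x ⟨p, rfl⟩
  exact lower p
end

section
/- Let n ≥ 1 and let θ : Fin n → ℝ be strictly monotone increasing. Consider simple graphs T on the vertex set Fin n that are spanning trees (connected and acyclic), with the weight of T defined as the sum over its edges {i,j} of |θ(i) − θ(j)|. Then every spanning tree T has weight at least θ(n−1) − θ(0), and a spanning tree T attains weight exactly θ(n−1) − θ(0) (equivalently, is of minimum weight) if and only if its edge set is precisely the set of consecutive pairs {{i, i+1} : 0 ≤ i < n−1}; in that case the multiset of its edge lengths is {θ(i+1) − θ(i) : 0 ≤ i < n−1}. -/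
/-- The length of an edge (an unordered pair of vertices) with respect to the point
positions `θ`. -/
noncomputable def edgeLength {n : ℕ} (θ : Fin n → ℝ) : Sym2 (Fin n) → ℝ :=
  Sym2.lift ⟨fun i j => |θ i - θ j|, fun i j => abs_sub_comm (θ i) (θ j)⟩

/-- The weight of a graph on `Fin n`: the sum of the lengths of its edges. -/
noncomputable def graphWeight {n : ℕ} (θ : Fin n → ℝ) (T : SimpleGraph (Fin n)) : ℝ :=
  ∑ e ∈ (Set.toFinite T.edgeSet).toFinset, edgeLength θ e

/-- The set of consecutive-pair edges `{{i, i+1} : 0 ≤ i < n−1}`. -/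
def consecutiveEdges (n : ℕ) : Set (Sym2 (Fin n)) :=
  {e | ∃ (i : ℕ) (h : i + 1 < n), e = s(⟨i, by omega⟩, ⟨i + 1, h⟩)}

namespace Stmt15Aux

variable {n : ℕ}

noncomputable def emin : Sym2 (Fin n) → Fin n :=
  Sym2.lift ⟨fun a b => min a b, fun a b => min_comm a b⟩

noncomputable def emax : Sym2 (Fin n) → Fin n :=
  Sym2.lift ⟨fun a b => max a b, fun a b => max_comm a b⟩

lemma emin_le_emax (e : Sym2 (Fin n)) : emin e ≤ emax e := by
  induction e using Sym2.ind with
  | _ a b => exact min_le_max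

lemma eq_mk_emin_emax (e : Sym2 (Fin n)) : e = s(emin e, emax e) := by
  induction e using Sym2.ind with
  | _ a b =>
    rcases le_total a b with h | h
    · simp [emin, emax, min_eq_left h, max_eq_right h]
    · rw [Sym2.eq_swap]
      simp [emin, emax, min_eq_right h, max_eq_left h, min_eq_left h, max_eq_right h]

lemma emin_lt_emax {e : Sym2 (Fin n)} (he : ¬ e.IsDiag) : emin e < emax e := by
  induction e using Sym2.ind with
  | _ a b =>
    rw [Sym2.mk_isDiag_iff] at he
    exact min_lt_max.2 he

lemma edgeLength_eq (θ : Fin n → ℝ) (hθ : Monotone θ) (e : Sym2 (Fin n)) :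
    edgeLength θ e = θ (emax e) - θ (emin e) := by
  induction e using Sym2.ind with
  | _ a b =>
    rcases le_total a b with h | h
    · have : θ a ≤ θ b := hθ h
      simp only [edgeLength, emin, emax, Sym2.lift_mk, min_eq_left h, max_eq_right h]
      rw [abs_of_nonpos (by linarith)]; ring
    · have : θ b ≤ θ a := hθ h
      simp only [edgeLength, emin, emax, Sym2.lift_mk, min_eq_right h, max_eq_left h]
      rw [abs_of_nonneg (by linarith)]

/-- extension of θ to ℕ -/
noncomputable def gv (θ : Fin n → ℝ) (i : ℕ) : ℝ := if h : i < n then θ ⟨i, h⟩ else 0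

lemma telescope (f : ℕ → ℝ) {a b : ℕ} (hab : a ≤ b) :
    ∑ i ∈ Finset.Ico a b, (f (i + 1) - f i) = f b - f a := by
  rw [Finset.sum_Ico_eq_sub _ hab, Finset.sum_range_sub, Finset.sum_range_sub]
  ring

lemma filter_cover (e : Sym2 (Fin n)) :
    (Finset.range (n - 1)).filter (fun i => (emin e).1 ≤ i ∧ i < (emax e).1)
      = Finset.Ico (emin e).1 (emax e).1 := by
  ext i
  simp only [Finset.mem_filter, Finset.mem_range, Finset.mem_Ico]
  have := (emax e).2
  omega

lemma edge_decomp (θ : Fin n → ℝ) (e : Sym2 (Fin n)) :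
    θ (emax e) - θ (emin e) =
      ∑ i ∈ Finset.range (n - 1),
        (if (emin e).1 ≤ i ∧ i < (emax e).1 then gv θ (i + 1) - gv θ i else 0) := by
  rw [← Finset.sum_filter]
  rw [filter_cover, telescope (gv θ) (by exact_mod_cast emin_le_emax e)]
  have h1 : gv θ (emax e).1 = θ (emax e) := by simp [gv, (emax e).2]
  have h2 : gv θ (emin e).1 = θ (emin e) := by simp [gv, (emin e).2]
  rw [h1, h2]

end Stmt15Aux

open Stmt15Aux

/-- for strictly increasing `θ : Fin n → ℝ`, every spanning tree on
`Fin n` has weight at least `θ (n−1) − θ 0`; a spanning tree attains this minimum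
weight exactly when its edges are the consecutive pairs, in which case the multiset
of its edge lengths is the multiset of consecutive gaps. -/
theorem stmt_15 (n : ℕ) (hn : 1 ≤ n) (θ : Fin n → ℝ) (hθ : StrictMono θ)
    (T : SimpleGraph (Fin n)) (hT : T.IsTree) :
    θ ⟨n - 1, by omega⟩ - θ ⟨0, by omega⟩ ≤ graphWeight θ T ∧
    (graphWeight θ T = θ ⟨n - 1, by omega⟩ - θ ⟨0, by omega⟩ ↔
      T.edgeSet = consecutiveEdges n) ∧
    (T.edgeSet = consecutiveEdges n →
      Multiset.map (edgeLength θ) (Set.toFinite T.edgeSet).toFinset.val =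
        Multiset.map
          (fun i : Fin (n - 1) =>
            θ ⟨i.1 + 1, by have := i.2; omega⟩ - θ ⟨i.1, by have := i.2; omega⟩)
          (Finset.univ : Finset (Fin (n - 1))).val) := by
  classical
  set E : Finset (Sym2 (Fin n)) := (Set.toFinite T.edgeSet).toFinset with hEdef
  have hmemE : ∀ e, e ∈ E ↔ e ∈ T.edgeSet := fun e => Set.Finite.mem_toFinset _
  set gap : ℕ → ℝ := fun i => gv θ (i + 1) - gv θ i with hgapdef
  set c : ℕ → ℕ :=
    fun i => (E.filter (fun e => (emin e).1 ≤ i ∧ i < (emax e).1)).card with hcdef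
  -- the weight as a gap-weighted coverage count
  have hweight : graphWeight θ T = ∑ i ∈ Finset.range (n - 1), (c i : ℝ) * gap i := by
    have h1 : graphWeight θ T = ∑ e ∈ E, (θ (emax e) - θ (emin e)) :=
      Finset.sum_congr rfl fun e _ => edgeLength_eq θ hθ.monotone e
    rw [h1]
    have h2 : ∀ e ∈ E, θ (emax e) - θ (emin e) =
        ∑ i ∈ Finset.range (n - 1),
          (if (emin e).1 ≤ i ∧ i < (emax e).1 then gap i else 0) :=
      fun e _ => edge_decomp θ e
    rw [Finset.sum_congr rfl h2, Finset.sum_comm]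
    refine Finset.sum_congr rfl fun i _ => ?_
    rw [← Finset.sum_filter, Finset.sum_const, nsmul_eq_mul]
  have hgap_pos : ∀ i ∈ Finset.range (n - 1), 0 < gap i := by
    intro i hi
    rw [Finset.mem_range] at hi
    have h1 : i + 1 < n := by omega
    have h2 : i < n := by omega
    have : θ ⟨i, h2⟩ < θ ⟨i + 1, h1⟩ := hθ (by simp [Fin.lt_def])
    simp only [hgapdef, gv, dif_pos h1, dif_pos h2]
    linarith
  have hcover : ∀ i ∈ Finset.range (n - 1), 1 ≤ c i := by
    intro i hi
    rw [Finset.mem_range] at hi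
    obtain ⟨p⟩ := hT.isConnected.preconnected ⟨i, by omega⟩ ⟨i + 1, by omega⟩
    obtain ⟨d, _, hdS, hdS'⟩ := p.exists_boundary_dart {v : Fin n | v.1 ≤ i}
      (by simp) (by simp)
    obtain ⟨⟨a, b⟩, hadj⟩ := d
    simp only [Set.mem_setOf_eq, not_le] at hdS hdS'
    have hab : a ≤ b := by rw [Fin.le_def]; omega
    have hde : s(a, b) ∈ E := (hmemE _).2 (T.mem_edgeSet.2 hadj)
    have : s(a, b) ∈ E.filter (fun e => (emin e).1 ≤ i ∧ i < (emax e).1) := by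
      refine Finset.mem_filter.2 ⟨hde, ?_, ?_⟩
      · simpa [emin, min_eq_left hab] using hdS
      · simpa [emax, max_eq_right hab] using hdS'
    exact Finset.card_pos.2 ⟨_, this⟩
  have htel : ∑ i ∈ Finset.range (n - 1), gap i
      = θ ⟨n - 1, by omega⟩ - θ ⟨0, by omega⟩ := by
    have : Finset.range (n - 1) = Finset.Ico 0 (n - 1) := by
      rw [Finset.range_eq_Ico]
    rw [this, telescope (gv θ) (Nat.zero_le _)]
    have h1 : n - 1 < n := by omega
    have h2 : 0 < n := by omega
    simp [gv, dif_pos h1, dif_pos h2]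
  -- lower bound
  have hlow : θ ⟨n - 1, by omega⟩ - θ ⟨0, by omega⟩ ≤ graphWeight θ T := by
    rw [hweight, ← htel]
    refine Finset.sum_le_sum fun i hi => ?_
    have := hgap_pos i hi
    have h1 : (1 : ℝ) ≤ (c i : ℝ) := by exact_mod_cast hcover i hi
    nlinarith
  -- the consecutive map
  have hn1 : ∀ i : Fin (n - 1), (i : ℕ) + 1 < n := fun i => by have := i.2; omega
  set φ : Fin (n - 1) → Sym2 (Fin n) :=
    fun i => s(⟨i.1, by omega⟩, ⟨i.1 + 1, hn1 i⟩) with hφdef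
  have hφinj : Function.Injective φ := by
    intro a b hab
    simp only [hφdef, Sym2.eq, Sym2.rel_iff', Prod.mk.injEq, Prod.swap_prod_mk,
      Fin.mk.injEq] at hab
    rcases hab with ⟨h1, _⟩ | ⟨h1, h2⟩
    · exact Fin.ext h1
    · omega
  -- if edges are consecutive, E is the image of φ
  have hEimg : T.edgeSet = consecutiveEdges n → E = Finset.image φ Finset.univ := by
    intro h2
    ext e
    simp only [hmemE, h2, consecutiveEdges, Set.mem_setOf_eq, Finset.mem_image,
      Finset.mem_univ, true_and, hφdef]
    constructor
    · rintro ⟨i, hi, rfl⟩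
      exact ⟨⟨i, by omega⟩, rfl⟩
    · rintro ⟨i, rfl⟩
      exact ⟨i.1, hn1 i, rfl⟩
  have hφlen : ∀ i : Fin (n - 1),
      edgeLength θ (φ i) = θ ⟨i.1 + 1, hn1 i⟩ - θ ⟨i.1, by have := hn1 i; omega⟩ := by
    intro i
    have : θ (⟨i.1, by have := hn1 i; omega⟩ : Fin n) < θ ⟨i.1 + 1, hn1 i⟩ :=
      hθ (by simp [Fin.lt_def])
    simp only [hφdef, edgeLength, Sym2.lift_mk]
    rw [abs_of_nonpos (by linarith)]
    ring
  -- weight of the consecutive tree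
  have hwcons : T.edgeSet = consecutiveEdges n →
      graphWeight θ T = θ ⟨n - 1, by omega⟩ - θ ⟨0, by omega⟩ := by
    intro h2
    rw [graphWeight, ← hEdef, hEimg h2,
      Finset.sum_image (fun a _ b _ h => hφinj h)]
    rw [← htel]
    rw [← Fin.sum_univ_eq_sum_range gap (n - 1)]
    refine Finset.sum_congr rfl fun i _ => ?_
    rw [hφlen i]
    have h1 : i.1 + 1 < n := hn1 i
    have h2 : i.1 < n := by omega
    simp [hgapdef, gv, dif_pos h1, dif_pos h2]
  -- equality implies consecutive
  have hmain : graphWeight θ T = θ ⟨n - 1, by omega⟩ - θ ⟨0, by omega⟩ →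
      T.edgeSet = consecutiveEdges n := by
    intro heq
    have hsum_eq : ∑ i ∈ Finset.range (n - 1), gap i
        = ∑ i ∈ Finset.range (n - 1), (c i : ℝ) * gap i := by
      rw [← hweight, heq, htel]
    have hle : ∀ i ∈ Finset.range (n - 1), gap i ≤ (c i : ℝ) * gap i := by
      intro i hi
      have := hgap_pos i hi
      have h1 : (1 : ℝ) ≤ (c i : ℝ) := by exact_mod_cast hcover i hi
      nlinarith
    have hc1 : ∀ i ∈ Finset.range (n - 1), c i = 1 := by
      intro i hi
      have h := (Finset.sum_eq_sum_iff_of_le hle).1 hsum_eq i hi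
      have hg := (hgap_pos i hi).ne'
      have : (c i : ℝ) = 1 := by
        refine (mul_right_cancel₀ hg ?_).symm
        rw [one_mul]; linarith
      exact_mod_cast this
    -- card of E
    have hcardE : E.card = n - 1 := by
      have hEF : E = T.edgeFinset := by
        ext e; simp [hmemE, SimpleGraph.mem_edgeFinset]
      have := hT.card_edgeFinset
      rw [Fintype.card_fin] at this
      rw [hEF]
      omega
    -- double counting
    have hdouble : ∑ e ∈ E, ((emax e).1 - (emin e).1)
        = ∑ i ∈ Finset.range (n - 1), c i := by
      have h1 : ∀ i, c i = ∑ e ∈ E,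
          (if (emin e).1 ≤ i ∧ i < (emax e).1 then 1 else 0) := by
        intro i
        rw [← Finset.sum_filter, Finset.sum_const, smul_eq_mul, mul_one]
      rw [Finset.sum_congr rfl fun i _ => h1 i, Finset.sum_comm]
      refine Finset.sum_congr rfl fun e _ => ?_
      rw [← Finset.sum_filter, Finset.sum_const, smul_eq_mul, mul_one, filter_cover,
        Nat.card_Ico]
    have hcsum : ∑ i ∈ Finset.range (n - 1), c i = n - 1 := by
      rw [Finset.sum_congr rfl hc1, Finset.sum_const, smul_eq_mul, mul_one,
        Finset.card_range]
    have hd1 : ∀ e ∈ E, (emax e).1 - (emin e).1 = 1 := by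
      have hge : ∀ e ∈ E, 1 ≤ (emax e).1 - (emin e).1 := by
        intro e he
        have : emin e < emax e :=
          emin_lt_emax (SimpleGraph.not_isDiag_of_mem_edgeSet T ((hmemE e).1 he))
        rw [Fin.lt_def] at this
        omega
      have hsums : ∑ e ∈ E, (1 : ℕ) = ∑ e ∈ E, ((emax e).1 - (emin e).1) := by
        rw [hdouble, hcsum, Finset.sum_const, smul_eq_mul, mul_one, hcardE]
      intro e he
      exact ((Finset.sum_eq_sum_iff_of_le hge).1 hsums e he).symm
    -- conclude set equality
    apply Set.eq_of_subset_of_subset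
    · intro e he
      have heE : e ∈ E := (hmemE e).2 he
      have hlt : emin e < emax e :=
        emin_lt_emax (SimpleGraph.not_isDiag_of_mem_edgeSet T he)
      rw [Fin.lt_def] at hlt
      have hd := hd1 e heE
      have hmaxv : (emax e).1 = (emin e).1 + 1 := by omega
      refine ⟨(emin e).1, by rw [← hmaxv]; exact (emax e).2, ?_⟩
      refine (eq_mk_emin_emax e).trans (congrArg (fun p : Fin n × Fin n => s(p.1, p.2)) (a₁ := (emin e, emax e)) (a₂ := (_, _)) ?_)
      exact Prod.ext (Fin.ext rfl) (Fin.ext hmaxv)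
    · rintro e ⟨i, hi, rfl⟩
      have hir : i ∈ Finset.range (n - 1) := Finset.mem_range.2 (by omega)
      have hc := hc1 i hir
      have hpos : 0 < c i := by omega
      obtain ⟨e, he⟩ := Finset.card_pos.1 hpos
      rw [Finset.mem_filter] at he
      obtain ⟨heE, h1, h2⟩ := he
      have hd := hd1 e heE
      have hminv : (emin e).1 = i := by omega
      have hmaxv : (emax e).1 = i + 1 := by omega
      have heq2 : e = s(⟨i, by omega⟩, ⟨i + 1, hi⟩) := by
        refine (eq_mk_emin_emax e).trans (congrArg (fun p : Fin n × Fin n => s(p.1, p.2)) (a₁ := (emin e, emax e)) (a₂ := (_, _)) ?_)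
        exact Prod.ext (Fin.ext hminv) (Fin.ext hmaxv)
      rw [← heq2]
      exact (hmemE e).1 heE
  refine ⟨hlow, ⟨hmain, hwcons⟩, ?_⟩
  -- multiset statement
  intro h2
  have himg := hEimg h2
  rw [himg, Finset.image_val_of_injOn (hφinj.injOn), Multiset.map_map]
  refine Multiset.map_congr rfl fun i _ => ?_
  exact hφlen i
end
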